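/- arXiv:2504.06534 — 5 statements merged into one kernel-verified Lean document; each statement's English description precedes it below -/
import Mathlib

section
/- Let uv be an irregular edge of the weighted disk graph G with 2r_u ≤ r_v. Then there is a grid cell c ∈ ⊞_{c_v} of the same grid level as c_v such that u ∈ P_small(c), i.e., u ∈ c and r_u < 8|c|. -/
noncomputable section

/-- Points of the plane. -/
abbrev Pt := EuclideanSpace ℝ (Fin 2)

/-- Membership in the closed axis-parallel square of Euclidean diameter `d`
(side `d/√2`) centered at `p`. -/
def inSq (p : Pt) (d : ℝ) (x : Pt) : Prop :=
  ∀ i, |x i - p i| ≤ d / (2 * Real.sqrt 2)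

/-- Adjacency in the weighted disk graph: distinct points whose disks intersect. -/
def Adj (r : Pt → ℝ) (x y : Pt) : Prop := x ≠ y ∧ dist x y ≤ r x + r y

/- The cell of a fine grid containing `u` is found by rounding each coordinate of `u - p` to a
multiple of the side length `d / √2`; it lies in the square of diameter `69 d` around `p` because
`|uv| < 24 d` and `24 < 17 √2`. -/

lemma exists_int_abs_sub_mul_le_half {t s : ℝ} (hs : 0 < s) {n : ℕ}
    (ht : |t| < (n + 1 / 2) * s) : ∃ k : ℤ, |t - k * s| ≤ s / 2 ∧ |(k : ℝ)| ≤ n := by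
  have hround : |t / s - round (t / s)| ≤ 1 / 2 := abs_sub_round _
  refine ⟨round (t / s), ?_, ?_⟩
  · calc |t - round (t / s) * s| = |t / s - round (t / s)| * s := by
          rw [← abs_of_pos hs, ← abs_mul, abs_of_pos hs, sub_mul, div_mul_cancel₀ _ hs.ne']
      _ ≤ 1 / 2 * s := by gcongr
      _ = s / 2 := by ring
  · have hts : |t / s| < n + 1 / 2 := by rwa [abs_div, abs_of_pos hs, div_lt_iff₀ hs]
    have hlt : |(round (t / s) : ℝ)| < n + 1 := by
      linarith [abs_sub_abs_le_abs_sub (round (t / s) : ℝ) (t / s),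
        abs_sub_comm (t / s) (round (t / s) : ℝ)]
    have : |round (t / s)| < n + 1 := by exact_mod_cast hlt
    exact_mod_cast (Int.lt_add_one_iff.mp this)

lemma exists_aligned_inSq_of_abs_sub_lt {p u : Pt} {d : ℝ} (hd : 0 < d) {n : ℕ}
    (hu : ∀ i, |u i - p i| < (2 * n + 1) * d / (2 * Real.sqrt 2)) :
    ∃ q : Pt, (∀ i, ∃ k : ℤ, q i - p i = k * (d / Real.sqrt 2)) ∧ inSq q d u ∧
      ∀ x, inSq q d x → inSq p ((2 * n + 1) * d) x := by
  set s := d / Real.sqrt 2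
  have hs : 0 < s := by positivity
  have hhalf : ∀ c : ℝ, c * d / (2 * Real.sqrt 2) = c * s / 2 := fun c => by ring
  have hhalf₁ : d / (2 * Real.sqrt 2) = s / 2 := by simpa using hhalf 1
  have hu' : ∀ i, |u i - p i| < (n + 1 / 2) * s := fun i => by
    linarith [hu i, hhalf (2 * n + 1)]
  choose k hk hkn using fun i => exists_int_abs_sub_mul_le_half hs (hu' i)
  refine ⟨WithLp.toLp 2 fun i => p i + k i * s, fun i => ⟨k i, by simp⟩, fun i => ?_,
    fun x hx i => ?_⟩
  · simpa [inSq, ← sub_sub, hhalf₁] using hk i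
  · have hxq : |x i - (p i + k i * s)| ≤ s / 2 := by simpa [hhalf₁] using hx i
    have hks : |(k i : ℝ) * s| ≤ n * s := by
      rw [abs_mul, abs_of_pos hs]; gcongr; exact hkn i
    rw [hhalf]
    calc |x i - p i| ≤ |x i - (p i + k i * s)| + |(k i : ℝ) * s| := by
          simpa using abs_sub_le (x i) (p i + k i * s) (p i)
      _ ≤ (2 * n + 1) * s / 2 := by linarith

lemma twentyfour_mul_add_le_sixtynine_mul {d : ℝ} (hd : 0 ≤ d) :
    24 * d + d / (2 * Real.sqrt 2) ≤ 69 * d / (2 * Real.sqrt 2) := by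
  have hsqrt : Real.sqrt 2 ≤ 17 / 12 := Real.sqrt_le_iff.mpr ⟨by norm_num, by norm_num⟩
  have hpos : 0 < Real.sqrt 2 := by positivity
  rw [le_div_iff₀ (by positivity), add_mul, div_mul_cancel₀ _ (by positivity)]
  nlinarith

theorem irregular_edge_small_cell_general
    (r : Pt → ℝ)
    (u v : Pt)
    (hedge : Adj r u v) (hirr : 2 * r u ≤ r v)
    (iv : ℤ) (pv : Pt)
    (hcv : inSq pv ((2:ℝ) ^ iv) v)
    (hrv' : r v < 16 * (2:ℝ) ^ iv) :
    ∃ q : Pt,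
      (∀ i, ∃ k : ℤ, q i - pv i = (k : ℝ) * ((2:ℝ) ^ iv / Real.sqrt 2)) ∧
      inSq q ((2:ℝ) ^ iv) u ∧
      (∀ x, inSq q ((2:ℝ) ^ iv) x → inSq pv (69 * (2:ℝ) ^ iv) x) ∧
      r u < 8 * (2:ℝ) ^ iv := by
  have hd : (0:ℝ) < 2 ^ iv := by positivity
  have huv : dist u v < 24 * 2 ^ iv := by linarith [hedge.2]
  have hu_near : ∀ i, |u i - pv i| < (2 * (34 : ℕ) + 1) * 2 ^ iv / (2 * Real.sqrt 2) :=
    fun i => calc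
      |u i - pv i| ≤ |u i - v i| + |v i - pv i| := abs_sub_le _ _ _
      _ < 24 * 2 ^ iv + 2 ^ iv / (2 * Real.sqrt 2) :=
          add_lt_add_of_lt_of_le ((PiLp.dist_apply_le u v i).trans_lt huv) (hcv i)
      _ ≤ _ := by norm_num; exact twentyfour_mul_add_le_sixtynine_mul hd.le
  obtain ⟨q, hq, huq, hsub⟩ := exists_aligned_inSq_of_abs_sub_lt hd hu_near
  refine ⟨q, hq, huq, fun x hx => ?_, by linarith⟩
  convert hsub x hx using 2
  norm_num

/-- If `uv` is an irregular edge with `2 r u ≤ r v`, and `c_v` is the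
grid cell of level `iv` (diameter `2^iv`) centered at `pv` with `v ∈ c_v` and
`r v ∈ [8·2^iv, 16·2^iv)`, then there is a grid cell `c` of the same level `iv`
(its center `q` differs from `pv` by integer multiples of the side length `2^iv/√2`
in each coordinate) contained in the square `□_{c_v}` of diameter `69·2^iv` centered
at `pv`, such that `u ∈ c` and `r u < 8·2^iv`, i.e. `u ∈ P_small(c)` for some
`c ∈ ⊞_{c_v}` of the same level as `c_v`. -/
theorem irregular_edge_small_cell
    (P : Set Pt) (r : Pt → ℝ) (hr : ∀ p ∈ P, 1 ≤ r p)
    (u v : Pt) (hu : u ∈ P) (hv : v ∈ P)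
    (hedge : Adj r u v) (hirr : 2 * r u ≤ r v)
    (iv : ℤ) (pv : Pt)
    (hcv : inSq pv ((2:ℝ) ^ iv) v)
    (hrv : 8 * (2:ℝ) ^ iv ≤ r v) (hrv' : r v < 16 * (2:ℝ) ^ iv) :
    ∃ q : Pt,
      (∀ i, ∃ k : ℤ, q i - pv i = (k : ℝ) * ((2:ℝ) ^ iv / Real.sqrt 2)) ∧
      inSq q ((2:ℝ) ^ iv) u ∧
      (∀ x, inSq q ((2:ℝ) ^ iv) x → inSq pv (69 * (2:ℝ) ^ iv) x) ∧
      r u < 8 * (2:ℝ) ^ iv :=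
  irregular_edge_small_cell_general r u v hedge hirr iv pv hcv hrv'
end
end

section
/- Let c be a grid cell and let u and u' be small neighbors of c, both connected to the source s in G. Then |d(u) − d(u')| ≤ 65|c|. -/
noncomputable section

/-- A (simple) path from `s` to `v` in the weighted disk graph on `P`. -/
def IsPath (P : Set Pt) (r : Pt → ℝ) (s v : Pt) (L : List Pt) : Prop :=
  L.head? = some s ∧ L.getLast? = some v ∧ (∀ x ∈ L, x ∈ P) ∧ L.Nodup ∧ L.Chain' (Adj r)

/-- The length of a path: the sum of the Euclidean lengths of its edges. -/
def pathLen : List Pt → ℝ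
  | [] => 0
  | [_] => 0
  | a :: b :: L => dist a b + pathLen (b :: L)

/-- Shortest-path distance from `s` to `v` in the weighted disk graph on `P`. -/
def spDist (P : Set Pt) (r : Pt → ℝ) (s v : Pt) : ℝ :=
  sInf (pathLen '' {L | IsPath P r s v L})

/-!
A small neighbor `u` of `c` with witness `m ∈ P_mid(c)` satisfies
`|um| ≤ r_u + r_m ≤ 3 r_m / 2 < 24|c|`, and two points of `c` are at distance at most
`|c| ≤ r_m + r_m'`. Hence `u, m, m', u'` is a walk of length `< 49|c|` in `G`, and extending
paths to `u` along it gives `d(u') ≤ d(u) + 49|c|`; symmetrically for `d(u)`.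
-/

lemma pathLen_nonneg : ∀ L : List Pt, 0 ≤ pathLen L
  | [] => le_rfl
  | [_] => le_rfl
  | _ :: b :: L => add_nonneg dist_nonneg (pathLen_nonneg (b :: L))

lemma pathLen_le_pathLen_append : ∀ L₁ L₂ : List Pt, pathLen L₁ ≤ pathLen (L₁ ++ L₂)
  | [], L₂ => pathLen_nonneg L₂
  | [_], L₂ => pathLen_nonneg _
  | a :: b :: L₁, L₂ => by
    simpa only [List.cons_append, pathLen, add_le_add_iff_left] using
      pathLen_le_pathLen_append (b :: L₁) L₂

lemma pathLen_concat {u : Pt} (v : Pt) :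
    ∀ {L : List Pt}, L.getLast? = some u → pathLen (L ++ [v]) = pathLen L + dist u v
  | [a], h => by
    obtain rfl : a = u := by simpa using h
    simp [pathLen]
  | a :: b :: L, h => by
    rw [List.getLast?_cons_cons] at h
    have ih := pathLen_concat v h
    simp only [List.cons_append, pathLen] at ih ⊢
    rw [ih]
    ring

lemma dist_le_half_of_inSq {p x : Pt} {d : ℝ} (hx : inSq p d x) : dist x p ≤ d / 2 := by
  have hside : (d / (2 * Real.sqrt 2)) ^ 2 = d ^ 2 / 8 := by
    rw [div_pow, mul_pow, Real.sq_sqrt zero_le_two]; norm_num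
  have hcoord : ∀ i, dist (x i) (p i) ^ 2 ≤ d ^ 2 / 8 := fun i =>
    hside ▸ pow_le_pow_left₀ dist_nonneg (hx i) 2
  have hd : 0 ≤ d := by
    have h := (abs_nonneg _).trans (hx 0)
    rwa [le_div_iff₀ (by positivity), zero_mul] at h
  rw [EuclideanSpace.dist_eq, Real.sqrt_le_left (by linarith), Fin.sum_univ_two]
  linarith [hcoord 0, hcoord 1]

lemma dist_le_of_inSq {p x y : Pt} {d : ℝ} (hx : inSq p d x) (hy : inSq p d y) :
    dist x y ≤ d := by
  linarith [dist_triangle_right x y p, dist_le_half_of_inSq hx, dist_le_half_of_inSq hy]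

section Paths

variable {P : Set Pt} {r : Pt → ℝ} {s u v : Pt} {L : List Pt}

lemma IsPath.prefix_of_mem (hL : IsPath P r s u L) (hv : v ∈ L) :
    ∃ L', IsPath P r s v L' ∧ pathLen L' ≤ pathLen L := by
  obtain ⟨hhead, -, hP, hnd, hch⟩ := hL
  obtain ⟨A, B, rfl⟩ := List.append_of_mem hv
  have hpre : A ++ [v] <+: A ++ v :: B := by simp
  refine ⟨A ++ [v], ⟨?_, List.getLast?_concat, fun x hx => hP x (hpre.subset hx),
    hnd.sublist hpre.sublist, List.IsChain.prefix hch hpre⟩, ?_⟩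
  · cases A <;> simpa using hhead
  · simpa using pathLen_le_pathLen_append (A ++ [v]) B

lemma IsPath.concat (hL : IsPath P r s u L) (hvP : v ∈ P) (hv : v ∉ L)
    (huv : dist u v ≤ r u + r v) : IsPath P r s v (L ++ [v]) := by
  obtain ⟨hhead, hlast, hP, hnd, hch⟩ := hL
  have hu : u ∈ L := List.mem_of_getLast? hlast
  refine ⟨by simp [hhead], List.getLast?_concat, ?_, ?_, ?_⟩
  · intro x hx
    rcases List.mem_append.mp hx with hx | hx
    · exact hP x hx
    · exact (List.mem_singleton.mp hx) ▸ hvP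
  · exact List.nodup_append.mpr ⟨hnd, List.nodup_singleton v, fun x hx y hy => by
      rintro rfl; exact hv ((List.mem_singleton.mp hy) ▸ hx)⟩
  · refine List.isChain_append.mpr ⟨hch, List.isChain_singleton v, ?_⟩
    intro x hx y hy
    obtain rfl : x = u := by simpa [hlast, eq_comm] using hx
    obtain rfl : y = v := by simpa [eq_comm] using hy
    exact ⟨fun h => hv (h ▸ hu), huv⟩

lemma IsPath.exists_extend (hL : IsPath P r s u L) (hvP : v ∈ P)
    (huv : dist u v ≤ r u + r v) :
    ∃ L', IsPath P r s v L' ∧ pathLen L' ≤ pathLen L + dist u v := by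
  by_cases hv : v ∈ L
  · obtain ⟨L', hL', hlen⟩ := hL.prefix_of_mem hv
    exact ⟨L', hL', hlen.trans (le_add_of_nonneg_right dist_nonneg)⟩
  · exact ⟨L ++ [v], hL.concat hvP hv huv, (pathLen_concat v hL.2.1).le⟩

lemma spDist_le_pathLen (hL : IsPath P r s v L) : spDist P r s v ≤ pathLen L :=
  csInf_le ⟨0, by rintro _ ⟨L', -, rfl⟩; exact pathLen_nonneg L'⟩ ⟨L, hL, rfl⟩

lemma spDist_le_spDist_add_dist (hu : ∃ L, IsPath P r s u L) (hvP : v ∈ P)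
    (huv : dist u v ≤ r u + r v) :
    (∃ L, IsPath P r s v L) ∧ spDist P r s v ≤ spDist P r s u + dist u v := by
  obtain ⟨L₀, hL₀⟩ := hu
  refine ⟨(hL₀.exists_extend hvP huv).imp fun _ h => h.1, ?_⟩
  have : spDist P r s v - dist u v ≤ spDist P r s u := by
    refine le_csInf ⟨_, L₀, hL₀, rfl⟩ ?_
    rintro _ ⟨L, hL, rfl⟩
    obtain ⟨L', hL', hlen⟩ := hL.exists_extend hvP huv
    linarith [spDist_le_pathLen hL']
  linarith

lemma spDist_le_of_small_neighbors {pc : Pt} {dc : ℝ} {u' m m' : Pt}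
    (hu : ∃ L, IsPath P r s u L) (hu' : u' ∈ P)
    (hm : m ∈ P) (hmc : inSq pc dc m) (hmr : 8 * dc ≤ r m) (hmr' : r m < 16 * dc)
    (hedge : Adj r m u) (hirr : 2 * r u ≤ r m)
    (hm' : m' ∈ P) (hmc' : inSq pc dc m') (hmr2 : 8 * dc ≤ r m') (hmr2' : r m' < 16 * dc)
    (hedge' : Adj r m' u') (hirr' : 2 * r u' ≤ r m') :
    spDist P r s u' ≤ spDist P r s u + 49 * dc := by
  have hmm' := dist_le_of_inSq hmc hmc'
  have hum : dist u m ≤ r u + r m := by rw [dist_comm, add_comm]; exact hedge.2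
  obtain ⟨hm_reach, hm_le⟩ := spDist_le_spDist_add_dist hu hm hum
  obtain ⟨hm'_reach, hm'_le⟩ :=
    spDist_le_spDist_add_dist hm_reach hm' (hmm'.trans (by linarith))
  obtain ⟨-, hu'_le⟩ := spDist_le_spDist_add_dist hm'_reach hu' hedge'.2
  linarith [hedge.2, hedge'.2]

end Paths

theorem small_neighbors_distance_difference_general
    (P : Set Pt) (r : Pt → ℝ)
    (s : Pt)
    (pc : Pt) (dc : ℝ)
    (u u' : Pt) (hu : u ∈ P) (hu' : u' ∈ P)
    (m : Pt) (hm : m ∈ P) (hmc : inSq pc dc m)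
    (hmr : 8 * dc ≤ r m) (hmr' : r m < 16 * dc)
    (hedge : Adj r m u) (hirr : 2 * r u ≤ r m)
    (m' : Pt) (hm' : m' ∈ P) (hmc' : inSq pc dc m')
    (hmr2 : 8 * dc ≤ r m') (hmr2' : r m' < 16 * dc)
    (hedge' : Adj r m' u') (hirr' : 2 * r u' ≤ r m')
    (hconn : ∃ L, IsPath P r s u L) (hconn' : ∃ L, IsPath P r s u' L) :
    |spDist P r s u - spDist P r s u'| ≤ 65 * dc := by
  have h₁ := spDist_le_of_small_neighbors hconn hu' hm hmc hmr hmr' hedge hirr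
    hm' hmc' hmr2 hmr2' hedge' hirr'
  have h₂ := spDist_le_of_small_neighbors hconn' hu hm' hmc' hmr2 hmr2' hedge' hirr'
    hm hmc hmr hmr' hedge hirr
  exact abs_sub_le_iff.mpr ⟨by linarith, by linarith⟩

/-- Let `c` be a grid cell (an axis-parallel square of diameter `dc`
centered at `pc`) and let `u, u'` be small neighbors of `c`: there are vertices
`m, m' ∈ P_mid(c)` (i.e. in `c` with radii in `[8 dc, 16 dc)`) forming irregular edges
with `u, u'` respectively, with `r m ≥ 2 r u` and `r m' ≥ 2 r u'`. If `u` and `u'` are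
connected to the source `s`, then `|d(u) − d(u')| ≤ 65·dc`. -/
theorem small_neighbors_distance_difference
    (P : Set Pt) (r : Pt → ℝ) (hr : ∀ p ∈ P, 1 ≤ r p)
    (s : Pt) (hs : s ∈ P)
    (pc : Pt) (dc : ℝ) (hdc : 0 < dc)
    (u u' : Pt) (hu : u ∈ P) (hu' : u' ∈ P)
    (m : Pt) (hm : m ∈ P) (hmc : inSq pc dc m)
    (hmr : 8 * dc ≤ r m) (hmr' : r m < 16 * dc)
    (hedge : Adj r m u) (hirr : 2 * r u ≤ r m)
    (m' : Pt) (hm' : m' ∈ P) (hmc' : inSq pc dc m')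
    (hmr2 : 8 * dc ≤ r m') (hmr2' : r m' < 16 * dc)
    (hedge' : Adj r m' u') (hirr' : 2 * r u' ≤ r m')
    (hconn : ∃ L, IsPath P r s u L) (hconn' : ∃ L, IsPath P r s u' L) :
    |spDist P r s u - spDist P r s u'| ≤ 65 * dc :=
  small_neighbors_distance_difference_general P r s pc dc u u' hu hu' m hm hmc hmr hmr' hedge hirr
    m' hm' hmc' hmr2 hmr2' hedge' hirr' hconn hconn'
end
end

section
/- Let o ∈ ℝ² and ℓ > 0. Let u, v ∈ ℝ² with radii r_u, r_v ≥ 2^10·ℓ be such that the angle ∠uov is at most arcsin(1/100), and | |uo| − r_u | < 5ℓ and | |vo| − r_v | < 5ℓ. Then |uv| ≤ r_u + r_v. (Consequently, the vertex set P_large(λ) of a pair λ = (c, C) forms a clique in the weighted disk graph.) -/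
/-!
The angle at `o` is acute, so the law of cosines gives `|uv|² ≤ |uo|² + |vo|²`. Since `|uo|` and
`|vo|` are within `5ℓ` of the radii, `r_u + r_v > |uo| + |vo| - 10ℓ`, and squaring this beats
`|uo|² + |vo|²` as soon as both distances are at least `20ℓ`, which the lower bound `2^10·ℓ` on the
radii guarantees with room to spare.
-/

noncomputable section

open EuclideanGeometry

theorem EuclideanGeometry.dist_sq_le_dist_sq_add_dist_sq_of_angle_le_pi_div_two
    {V P : Type*} [NormedAddCommGroup V] [InnerProductSpace ℝ V] [MetricSpace P]
    [NormedAddTorsor V P] {p₁ p₂ p₃ : P} (h : ∠ p₁ p₂ p₃ ≤ Real.pi / 2) :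
    dist p₁ p₃ ^ 2 ≤ dist p₁ p₂ ^ 2 + dist p₃ p₂ ^ 2 := by
  have hcos : 0 ≤ Real.cos (∠ p₁ p₂ p₃) :=
    Real.cos_nonneg_of_neg_pi_div_two_le_of_le (by linarith [angle_nonneg p₁ p₂ p₃, Real.pi_pos]) h
  rw [sq, sq, sq, law_cos p₁ p₂ p₃]
  have : 0 ≤ 2 * dist p₁ p₂ * dist p₃ p₂ * Real.cos (∠ p₁ p₂ p₃) := by positivity
  linarith

theorem sq_add_sq_le_sq_add_of_sub_le {a b r s δ : ℝ} (hδ : 0 ≤ δ)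
    (ha : 4 * δ ≤ a) (hb : 4 * δ ≤ b) (hr : a - δ ≤ r) (hs : b - δ ≤ s) :
    a ^ 2 + b ^ 2 ≤ (r + s) ^ 2 := by
  -- `(a + b - 2δ)² = a² + b² + 2(a - 2δ)(b - 2δ) - 4δ²`
  have hprod : (2 * δ) * (2 * δ) ≤ (a - 2 * δ) * (b - 2 * δ) :=
    mul_le_mul (by linarith) (by linarith) (by linarith) (by linarith)
  calc a ^ 2 + b ^ 2
      ≤ (a + b - 2 * δ) ^ 2 := by nlinarith [hprod]
    _ ≤ (r + s) ^ 2 := pow_le_pow_left₀ (by linarith) (by linarith) 2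

/-- Let `o ∈ ℝ²` and `ℓ > 0`. Let `u, v ∈ ℝ²` with radii
`ru, rv ≥ 2^10·ℓ` such that the angle `∠ u o v` is at most `arcsin(1/100)`, and
`||uo| − ru| < 5ℓ`, `||vo| − rv| < 5ℓ`. Then `|uv| ≤ ru + rv`; consequently the
set `P_large(λ)` of a pair `λ = (c, C)` forms a clique in the weighted disk graph. -/
theorem plarge_clique
    (o : Pt) (ℓ : ℝ) (hℓ : 0 < ℓ)
    (u v : Pt) (ru rv : ℝ)
    (hru : 2 ^ 10 * ℓ ≤ ru) (hrv : 2 ^ 10 * ℓ ≤ rv)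
    (hangle : EuclideanGeometry.angle u o v ≤ Real.arcsin (1 / 100))
    (hu : |dist u o - ru| < 5 * ℓ) (hv : |dist v o - rv| < 5 * ℓ) :
    dist u v ≤ ru + rv := by
  have hacute : ∠ u o v ≤ Real.pi / 2 := hangle.trans (Real.arcsin_le_pi_div_two _)
  obtain ⟨hu₁, hu₂⟩ := abs_lt.mp hu
  obtain ⟨hv₁, hv₂⟩ := abs_lt.mp hv
  refine le_of_sq_le_sq ?_ (by linarith)
  calc dist u v ^ 2
      ≤ dist u o ^ 2 + dist v o ^ 2 := dist_sq_le_dist_sq_add_dist_sq_of_angle_le_pi_div_two hacute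
    _ ≤ (ru + rv) ^ 2 :=
      sq_add_sq_le_sq_add_of_sub_le (by linarith : 0 ≤ 5 * ℓ) (by linarith) (by linarith)
        (by linarith) (by linarith)
end
end

section
/- Let o ∈ ℝ² and ℓ > 0. Let v, v' ∈ ℝ² with radii r_v ≥ r_{v'} ≥ 2^10·ℓ be such that the angle ∠v o v' is at most arcsin(1/100), and | |vo| − r_v | < 5ℓ and | |v'o| − r_{v'} | < 5ℓ. Then |vv'| < r_v − 6ℓ. -/
/-!
By the law of cosines, `|vv'|² = (|vo| - |v'o|)² + 2 |vo| |v'o| (1 - cos ∠v o v')`. The angle bound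
gives `1 - cos ∠v o v' ≤ 1/100²`, so the second term is a tiny fraction of `rv · rv'`, while the first
is below `(rv - rv' + 10ℓ)²`. Since `rv' ≥ 2^10 ℓ`, the gain `(rv - 6ℓ)² - (rv - rv' + 10ℓ)²`,
of order `rv · rv'`, absorbs that fraction.
-/

noncomputable section

open Real EuclideanGeometry

theorem dist_sq_eq_sub_sq_add_one_sub_cos_angle {V P : Type*} [NormedAddCommGroup V]
    [InnerProductSpace ℝ V] [MetricSpace P] [NormedAddTorsor V P] (v o w : P) :
    dist v w ^ 2 = (dist v o - dist w o) ^ 2 + 2 * dist v o * dist w o * (1 - cos (∠ v o w)) := by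
  linear_combination law_cos v o w

theorem one_sub_cos_le_sq_of_le_arcsin {s θ : ℝ} (hθ0 : 0 ≤ θ) (hθ : θ ≤ arcsin s) :
    1 - cos θ ≤ s ^ 2 := by
  have hcos : √(1 - s ^ 2) ≤ cos θ := by
    rw [← cos_arcsin]
    exact cos_le_cos_of_nonneg_of_le_pi hθ0 (by linarith [arcsin_le_pi_div_two s, pi_pos]) hθ
  have hsqrt : 1 - s ^ 2 ≤ √(1 - s ^ 2) := le_sqrt_self_iff.mpr (sub_le_self _ (sq_nonneg s))
  linarith

theorem sub_sq_add_mul_lt_sq {ℓ r r' a b c : ℝ} (hℓ : 0 < ℓ) (hr : r' ≤ r) (hr' : 2 ^ 10 * ℓ ≤ r')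
    (ha : |a - r| < 5 * ℓ) (hb : |b - r'| < 5 * ℓ) (hc : c ≤ 1 / 10000) :
    (a - b) ^ 2 + 2 * a * b * c < (r - 6 * ℓ) ^ 2 := by
  rw [abs_lt] at ha hb
  have hab : |a - b| < r - r' + 10 * ℓ := abs_lt.2 ⟨by linarith, by linarith⟩
  have hsq : (a - b) ^ 2 < (r - r' + 10 * ℓ) ^ 2 := by
    simpa only [sq_abs] using pow_lt_pow_left₀ hab (abs_nonneg _) two_ne_zero
  have hprod : a * b ≤ (r + 5 * ℓ) * (r' + 5 * ℓ) :=
    mul_le_mul (by linarith) (by linarith) (by linarith) (by linarith)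
  have hc' : a * b * c ≤ a * b * (1 / 10000) :=
    mul_le_mul_of_nonneg_left hc (mul_nonneg (by linarith) (by linarith))
  calc (a - b) ^ 2 + 2 * a * b * c
      < (r - r' + 10 * ℓ) ^ 2 + (r + 5 * ℓ) * (r' + 5 * ℓ) / 5000 := by linarith
    _ ≤ (r - 6 * ℓ) ^ 2 := by nlinarith

/-- Let `o ∈ ℝ²` and `ℓ > 0`. Let `v, v' ∈ ℝ²` with radii
`rv ≥ rv' ≥ 2^10·ℓ` such that the angle `∠ v o v'` is at most `arcsin(1/100)`, and
`||vo| − rv| < 5ℓ`, `||v'o| − rv'| < 5ℓ`. Then `|vv'| < rv − 6ℓ`. -/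
theorem plarge_close
    (o : Pt) (ℓ : ℝ) (hℓ : 0 < ℓ)
    (v v' : Pt) (rv rv' : ℝ)
    (hord : rv' ≤ rv) (hrv' : 2 ^ 10 * ℓ ≤ rv')
    (hangle : EuclideanGeometry.angle v o v' ≤ Real.arcsin (1 / 100))
    (hv : |dist v o - rv| < 5 * ℓ) (hv' : |dist v' o - rv'| < 5 * ℓ) :
    dist v v' < rv - 6 * ℓ := by
  have hcos : 1 - cos (∠ v o v') ≤ 1 / 10000 :=
    (one_sub_cos_le_sq_of_le_arcsin (angle_nonneg v o v') hangle).trans_eq (by norm_num)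
  have hsq : dist v v' ^ 2 < (rv - 6 * ℓ) ^ 2 := by
    rw [dist_sq_eq_sub_sq_add_one_sub_cos_angle v o v']
    exact sub_sq_add_mul_lt_sq hℓ hord hrv' hv hv' hcos
  exact lt_of_pow_lt_pow_left₀ 2 (by linarith) hsq
end
end

section
/- Let o ∈ ℝ² and ℓ > 0, and let x, w, y, u ∈ ℝ² with radii r_y ≥ 2^10·ℓ be such that |xo| ≤ ℓ, |wo| ≤ ℓ, the angle ∠you is at most arcsin(1/100), |yo| < r_y + 5ℓ, and |uo| ≥ r_y − 5ℓ. Then |xy| + |yu| < |uw| + (1/8)·r_y. -/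
/-!
Dropping the perpendicular from `y` to the line `ou` splits `|yu|` into a leg
`||uo| - |yo| cos θ|` along the line and a leg `|yo| sin θ` across it, where `θ = ∠you`.
When `θ ≤ arcsin ε` both `sin θ` and `1 - cos θ` are at most `ε`, so
`|yu| ≤ ||uo| - |yo|| + 2ε|yo|`. Together with `|xy| ≤ |yo| + ℓ` and `|uo| ≤ |uw| + ℓ`,
the claim becomes linear arithmetic in `|yo|`, `|uo|`, `ℓ` and `r_y`.
-/

noncomputable section

open EuclideanGeometry Real

section

variable {V P : Type*} [NormedAddCommGroup V] [InnerProductSpace ℝ V] [MetricSpace P]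
  [NormedAddTorsor V P]

theorem dist_le_abs_sub_mul_cos_angle_add_mul_sin_angle (p₁ p₂ p₃ : P) :
    dist p₁ p₃ ≤
      |dist p₃ p₂ - dist p₁ p₂ * cos (∠ p₁ p₂ p₃)| + dist p₁ p₂ * sin (∠ p₁ p₂ p₃) := by
  have hcos_law := law_cos p₁ p₂ p₃
  set a := dist p₁ p₂
  set b := dist p₃ p₂
  set θ := ∠ p₁ p₂ p₃
  have hpyth : dist p₁ p₃ ^ 2 = (b - a * cos θ) ^ 2 + (a * sin θ) ^ 2 := by
    linear_combination hcos_law - a ^ 2 * sin_sq_add_cos_sq θ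
  have hsin : 0 ≤ a * sin θ :=
    mul_nonneg dist_nonneg (sin_nonneg_of_nonneg_of_le_pi (angle_nonneg _ _ _) (angle_le_pi _ _ _))
  rw [← pow_le_pow_iff_left₀ dist_nonneg (by positivity) two_ne_zero, hpyth]
  nlinarith [sq_abs (b - a * cos θ), abs_nonneg (b - a * cos θ)]

theorem dist_le_abs_dist_sub_dist_add_of_angle_le_arcsin {ε : ℝ} {p₁ p₂ p₃ : P}
    (h : ∠ p₁ p₂ p₃ ≤ arcsin ε) :
    dist p₁ p₃ ≤ |dist p₃ p₂ - dist p₁ p₂| + 2 * ε * dist p₁ p₂ := by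
  set a := dist p₁ p₂
  set θ := ∠ p₁ p₂ p₃
  have hθ₀ : 0 ≤ θ := angle_nonneg _ _ _
  have hθ : θ ∈ Set.Icc (-(π / 2)) (π / 2) :=
    ⟨by linarith [pi_pos], h.trans (arcsin_le_pi_div_two ε)⟩
  have hsin_le : sin θ ≤ ε :=
    (le_arcsin_iff_sin_le' ⟨by linarith [pi_pos], hθ.2⟩).1 h
  have hsin₀ : 0 ≤ sin θ := sin_nonneg_of_nonneg_of_le_pi hθ₀ (angle_le_pi _ _ _)
  have hcos₀ : 0 ≤ cos θ := cos_nonneg_of_mem_Icc hθ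
  have hcos : 1 - cos θ ≤ ε := by
    nlinarith [sin_sq_add_cos_sq θ, cos_le_one θ, sin_le_one θ]
  have ha : 0 ≤ a := dist_nonneg
  calc dist p₁ p₃ ≤ |dist p₃ p₂ - a * cos θ| + a * sin θ :=
        dist_le_abs_sub_mul_cos_angle_add_mul_sin_angle p₁ p₂ p₃
    _ ≤ (|dist p₃ p₂ - a| + a * (1 - cos θ)) + a * sin θ := by
        gcongr
        calc |dist p₃ p₂ - a * cos θ| = |(dist p₃ p₂ - a) + a * (1 - cos θ)| := by ring_nf
          _ ≤ |dist p₃ p₂ - a| + |a * (1 - cos θ)| := abs_add_le _ _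
          _ = |dist p₃ p₂ - a| + a * (1 - cos θ) := by
              rw [abs_of_nonneg (mul_nonneg ha (by linarith [cos_le_one θ]))]
    _ ≤ |dist p₃ p₂ - a| + 2 * ε * a := by nlinarith

end

theorem detour_bound_general
    (o : Pt) (ℓ : ℝ)
    (x w y u : Pt) (ry : ℝ) (hry : 2 ^ 10 * ℓ ≤ ry)
    (hx : dist x o ≤ ℓ) (hw : dist w o ≤ ℓ)
    (hangle : EuclideanGeometry.angle y o u ≤ Real.arcsin (1 / 100))
    (hy : dist y o < ry + 5 * ℓ) (hu : ry - 5 * ℓ ≤ dist u o) :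
    dist x y + dist y u < dist u w + ry / 8 := by
  have hℓ : 0 ≤ ℓ := dist_nonneg.trans hx
  have hxy : dist x y ≤ dist y o + ℓ := (dist_triangle_right x y o).trans (by linarith)
  have huw : dist u o ≤ dist u w + ℓ := (dist_triangle u w o).trans (by linarith)
  have hyu := dist_le_abs_dist_sub_dist_add_of_angle_le_arcsin hangle
  have hyo : 0 ≤ dist y o := dist_nonneg
  rcases abs_cases (dist u o - dist y o) with ⟨habs, -⟩ | ⟨habs, -⟩ <;> linarith

/-- Let `o ∈ ℝ²` and `ℓ > 0`, and let `x, w, y, u ∈ ℝ²` with radius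
`ry ≥ 2^10·ℓ` be such that `|xo| ≤ ℓ`, `|wo| ≤ ℓ`, the angle `∠ y o u` is at most
`arcsin(1/100)`, `|yo| < ry + 5ℓ`, and `|uo| ≥ ry − 5ℓ`. Then
`|xy| + |yu| < |uw| + ry/8`. -/
theorem detour_bound
    (o : Pt) (ℓ : ℝ) (hℓ : 0 < ℓ)
    (x w y u : Pt) (ry : ℝ) (hry : 2 ^ 10 * ℓ ≤ ry)
    (hx : dist x o ≤ ℓ) (hw : dist w o ≤ ℓ)
    (hangle : EuclideanGeometry.angle y o u ≤ Real.arcsin (1 / 100))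
    (hy : dist y o < ry + 5 * ℓ) (hu : ry - 5 * ℓ ≤ dist u o) :
    dist x y + dist y u < dist u w + ry / 8 :=
  detour_bound_general o ℓ x w y u ry hry hx hw hangle hy hu
end
end
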